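/- arXiv:1707.05401 — 4 statements merged into one kernel-verified Lean document; each statement's English description precedes it below -/
import Mathlib

section
/- Let f be a random circle homeomorphism that has a unique f-minimal set G, and suppose G is an arc, i.e. a closed connected proper subset of S¹ that is not a single point. Then every orientation-preserving homeomorphism τ of S¹ satisfying τ ∘ f_α = f_α ∘ τ for all α ∈ Δ has a fixed point in G; in particular, f admits no symmetry. -/
open MeasureTheory Filter Topology Set
open scoped ENNReal

noncomputable section

/-- The circle `S¹ = ℝ/ℤ`. -/
abbrev S1 : Type := AddCircle (1 : ℝ)

namespace RandomCircle

/-- The representative of `x ∈ S¹` in `[0,1)`. -/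
def rep (x : S1) : ℝ := (AddCircle.equivIco 1 0 x : ℝ)

/-- `dPlus x y` is the anticlockwise distance from `x` to `y`, i.e. the representative
of `y - x` in `[0,1)`. -/
def dPlus (x y : S1) : ℝ := rep (y - x)

/-- The closed anticlockwise arc `[x,y]` from `x` to `y`. -/
def cIcc (x y : S1) : Set S1 := {z | dPlus x z ≤ dPlus x y}

/-- The arc `[x,y[`. -/
def cIco (x y : S1) : Set S1 := {z | dPlus x z < dPlus x y}

/-- The arc `]x,y]`. -/
def cIoc (x y : S1) : Set S1 := {z | 0 < dPlus x z ∧ dPlus x z ≤ dPlus x y}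

/-- The open arc `]x,y[`. -/
def cIoo (x y : S1) : Set S1 := {z | 0 < dPlus x z ∧ dPlus x z < dPlus x y}

/-- A homeomorphism of the circle is orientation-preserving if it admits a strictly
increasing degree-one lift to `ℝ`. -/
def OrientationPreserving (h : S1 ≃ₜ S1) : Prop :=
  ∃ H : ℝ → ℝ, StrictMono H ∧ (∀ x, H (x + 1) = H x + 1) ∧
    ∀ x : ℝ, h ((x : ℝ) : S1) = ((H x : ℝ) : S1)

/-- A homeomorphism of the circle is orientation-reversing if it admits a strictly
decreasing degree-(-1) lift to `ℝ`. -/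
def OrientationReversing (h : S1 ≃ₜ S1) : Prop :=
  ∃ H : ℝ → ℝ, StrictAnti H ∧ (∀ x, H (x + 1) = H x - 1) ∧
    ∀ x : ℝ, h ((x : ℝ) : S1) = ((H x : ℝ) : S1)

/-- A random circle homeomorphism over a noise space `Δ`. -/
structure RandomCircleHomeo (Δ : Type*) [TopologicalSpace Δ] where
  homeo : Δ → S1 ≃ₜ S1
  orient : ∀ α, OrientationPreserving (homeo α)
  cont : Continuous fun p : Δ × S1 => homeo p.1 p.2
  nondeg : ∀ x : ℤ → S1, ¬ Dense (Set.range x) →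
    ∃ (n : ℤ) (α : Δ), homeo α (x n) ≠ x (n + 1)

variable {Δ : Type*} [TopologicalSpace Δ]

/-- A closed `f`-invariant set. -/
def RandomCircleHomeo.IsInvariant (f : RandomCircleHomeo Δ) (G : Set S1) : Prop :=
  IsClosed G ∧ ∀ α, f.homeo α '' G ⊆ G

/-- An `f`-minimal set. -/
def RandomCircleHomeo.IsMinimal (f : RandomCircleHomeo Δ) (G : Set S1) : Prop :=
  f.IsInvariant G ∧ G.Nonempty ∧
    ∀ G' ⊆ G, f.IsInvariant G' → G'.Nonempty → G' = G

/-- A closed set invariant under the inverse random homeomorphism `f⁻¹`. -/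
def RandomCircleHomeo.IsInvInvariant (f : RandomCircleHomeo Δ) (G : Set S1) : Prop :=
  IsClosed G ∧ ∀ α, (f.homeo α).symm '' G ⊆ G

/-- An `f⁻¹`-minimal set. -/
def RandomCircleHomeo.IsInvMinimal (f : RandomCircleHomeo Δ) (G : Set S1) : Prop :=
  f.IsInvInvariant G ∧ G.Nonempty ∧
    ∀ G' ⊆ G, f.IsInvInvariant G' → G'.Nonempty → G' = G

/-- A symmetry of `f`: a nontrivial orientation-preserving finite-order homeomorphism
commuting with every `f_α`. -/
def IsSymmetry (f : RandomCircleHomeo Δ) (τ : S1 ≃ₜ S1) : Prop :=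
  OrientationPreserving τ ∧ (⇑τ ≠ id) ∧ (∃ k : ℕ, 0 < k ∧ (⇑τ)^[k] = id) ∧
    ∀ α x, τ (f.homeo α x) = f.homeo α (τ x)

/-- The order of a finite-order homeomorphism. -/
def symOrder (τ : S1 ≃ₜ S1) : ℕ := sInf {k : ℕ | 0 < k ∧ (⇑τ)^[k] = id}

/-- The union of all `f`-minimal sets. -/
def minimalUnion (f : RandomCircleHomeo Δ) : Set S1 :=
  ⋃₀ {G | f.IsMinimal G}

/-- `f` and `g` are deterministically topologically conjugate. -/
def DetTopConj (f g : RandomCircleHomeo Δ) : Prop :=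
  ∃ h : S1 ≃ₜ S1, ∀ α x, f.homeo α x = h.symm (g.homeo α (h x))

/-- `f` and `g` are deterministically orientationally conjugate. -/
def DetOrientConj (f g : RandomCircleHomeo Δ) : Prop :=
  ∃ h : S1 ≃ₜ S1, OrientationPreserving h ∧ ∀ α x, f.homeo α x = h.symm (g.homeo α (h x))

/-- The left shift on `Δ^ℤ`. -/
def shift (ω : ℤ → Δ) : ℤ → Δ := fun n => ω (n + 1)

/-- `n`-fold left shift. -/
def shiftN (n : ℕ) (ω : ℤ → Δ) : ℤ → Δ := fun i => ω (i + n)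

/-- `n`-fold right (inverse) shift, i.e. `θ^{-n}`. -/
def shiftNeg (n : ℕ) (ω : ℤ → Δ) : ℤ → Δ := fun i => ω (i - n)

/-- The forward composition `φ_f(n, ω) = f_{ω(n-1)} ∘ ⋯ ∘ f_{ω 0}`. -/
def fwd (f : RandomCircleHomeo Δ) (ω : ℤ → Δ) : ℕ → S1 ≃ₜ S1
  | 0 => Homeomorph.refl S1
  | n + 1 => (fwd f ω n).trans (f.homeo (ω n))

/-- `φ_f(n, θ^{-n}ω)`, the "pullback" composition `f_{ω(-1)} ∘ ⋯ ∘ f_{ω(-n)}`. -/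
def pull (f : RandomCircleHomeo Δ) (ω : ℤ → Δ) (n : ℕ) : S1 ≃ₜ S1 :=
  fwd f (shiftNeg n ω) n

/-- `φ_f(-n, θ^{n}ω) = (f_{ω(n-1)} ∘ ⋯ ∘ f_{ω 0})⁻¹`. -/
def pullBack (f : RandomCircleHomeo Δ) (ω : ℤ → Δ) (n : ℕ) : S1 ≃ₜ S1 :=
  (fwd f ω n).symm


/-- Composition over a finite tuple: `f_{a(n-1)} ∘ ⋯ ∘ f_{a 0}`. -/
def fwdFin (f : RandomCircleHomeo Δ) : ∀ {n : ℕ}, (Fin n → Δ) → (S1 ≃ₜ S1)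
  | 0, _ => Homeomorph.refl S1
  | n + 1, a => (fwdFin f (fun i : Fin n => a i.castSucc)).trans (f.homeo (a (Fin.last n)))

/-- Anticlockwise index shift by `m` steps modulo `k` in `Fin k`. -/
def idx {k : ℕ} (hk : 0 < k) (i : Fin k) (m : ℕ) : Fin k :=
  ⟨(i.1 + m) % k, Nat.mod_lt _ hk⟩

/-- The circle map `g_{k,l}([x]) = [x + sin(2πkx)/(2πk) + l/k]`. -/
def gkl (k l : ℕ) : S1 → S1 :=
  fun y => y + ((Real.sin (2 * Real.pi * k * rep y) / (2 * Real.pi * k) + l / k : ℝ) : S1)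

variable [MeasurableSpace Δ]

/-- `P` is the two-sided i.i.d. product of `ν` on `Δ^ℤ`. -/
def IsProductOf (ν : Measure Δ) (P : Measure (ℤ → Δ)) : Prop :=
  IsProbabilityMeasure P ∧
  ∀ (t : Finset ℤ) (s : ℤ → Set Δ), (∀ i, MeasurableSet (s i)) →
    P {ω | ∀ i ∈ t, ω i ∈ s i} = ∏ i ∈ t, ν (s i)

/-- The σ-algebra `F₋ = σ(ω ↦ ω i : i < 0)` on `Δ^ℤ`. -/
def Fminus (Δ : Type*) [MeasurableSpace Δ] : MeasurableSpace (ℤ → Δ) :=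
  MeasurableSpace.comap (fun ω (i : {i : ℤ // i < 0}) => ω i.1) inferInstance

/-- The σ-algebra `F₊ = σ(ω ↦ ω i : i ≥ 0)` on `Δ^ℤ`. -/
def Fplus (Δ : Type*) [MeasurableSpace Δ] : MeasurableSpace (ℤ → Δ) :=
  MeasurableSpace.comap (fun ω (i : {i : ℤ // 0 ≤ i}) => ω i.1) inferInstance

/-- The skew-product map `Θ_f(ω, x) = (θω, f_{ω 0} x)` on `Ω × S¹`. -/
def ThetaF (f : RandomCircleHomeo Δ) : ((ℤ → Δ) × S1) → ((ℤ → Δ) × S1) :=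
  fun p => (shift p.1, f.homeo (p.1 0) p.2)

/-- A `φ_f`-invariant measure: a probability measure on `Ω × S¹` with `Ω`-marginal `P`,
invariant under `Θ_f`. -/
def IsPhiInvariant (f : RandomCircleHomeo Δ) (P : Measure (ℤ → Δ))
    (μ : Measure ((ℤ → Δ) × S1)) : Prop :=
  IsProbabilityMeasure μ ∧ μ.map Prod.fst = P ∧ μ.map (ThetaF f) = μ

/-- A `φ_f`-ergodic measure. -/
def IsPhiErgodic (f : RandomCircleHomeo Δ) (P : Measure (ℤ → Δ))
    (μ : Measure ((ℤ → Δ) × S1)) : Prop :=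
  IsPhiInvariant f P μ ∧ Ergodic (ThetaF f) μ

/-- An `f`-stationary measure. -/
def IsStationary (f : RandomCircleHomeo Δ) (ν : Measure Δ) (ρ : Measure S1) : Prop :=
  IsProbabilityMeasure ρ ∧
    Measure.map (fun p : Δ × S1 => f.homeo p.1 p.2) (ν.prod ρ) = ρ

/-- An `f⁻¹`-stationary measure. -/
def IsInvStationary (f : RandomCircleHomeo Δ) (ν : Measure Δ) (ρ : Measure S1) : Prop :=
  IsProbabilityMeasure ρ ∧
    Measure.map (fun p : Δ × S1 => (f.homeo p.1).symm p.2) (ν.prod ρ) = ρ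

/-- `f` is contractive, with attractor `a` and repeller `r`. -/
def IsContractiveWith (f : RandomCircleHomeo Δ) (P : Measure (ℤ → Δ))
    (a r : (ℤ → Δ) → S1) : Prop :=
  Measurable[Fminus Δ] a ∧ Measurable[Fplus Δ] r ∧
  (∀ᵐ ω ∂P, f.homeo (ω 0) (a ω) = a (shift ω)) ∧
  (∀ᵐ ω ∂P, f.homeo (ω 0) (r ω) = r (shift ω)) ∧
  (∀ᵐ ω ∂P, ∀ x : S1, x ≠ r ω →
    Tendsto (fun n => dist (fwd f ω n x) (a (shiftN n ω))) atTop (𝓝 0))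

/-- `f` is contractive. -/
def IsContractive (f : RandomCircleHomeo Δ) (P : Measure (ℤ → Δ)) : Prop :=
  ∃ a r, IsContractiveWith f P a r

/-- `f` and `g` have topologically conjugate dynamics. -/
def TopConjDyn (f g : RandomCircleHomeo Δ) (P : Measure (ℤ → Δ)) : Prop :=
  ∃ h : (ℤ → Δ) → S1 ≃ₜ S1,
    (∀ x : S1, Measurable fun ω => h ω x) ∧
    ∀ᵐ ω ∂P, ∀ x, f.homeo (ω 0) x = (h (shift ω)).symm (g.homeo (ω 0) (h ω x))

/-- `f` and `g` have orientationally conjugate dynamics. -/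
def OrientConjDyn (f g : RandomCircleHomeo Δ) (P : Measure (ℤ → Δ)) : Prop :=
  ∃ h : (ℤ → Δ) → S1 ≃ₜ S1,
    (∀ x : S1, Measurable fun ω => h ω x) ∧
    (∀ᵐ ω ∂P, OrientationPreserving (h ω)) ∧
    ∀ᵐ ω ∂P, ∀ x, f.homeo (ω 0) x = (h (shift ω)).symm (g.homeo (ω 0) (h ω x))

/-- `x_n ↗ x`: convergence with `x_{n+1} ∈ [x_n, x[`. -/
def SeqUp (x : ℕ → S1) (l : S1) : Prop :=
  Tendsto x atTop (𝓝 l) ∧ ∀ n, x (n + 1) ∈ cIco (x n) l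

/-- `x_n ↘ x`: convergence with `x_{n+1} ∈ ]x, x_n]`. -/
def SeqDown (x : ℕ → S1) (l : S1) : Prop :=
  Tendsto x atTop (𝓝 l) ∧ ∀ n, x (n + 1) ∈ cIoc l (x n)

/-- The rotation `τ_m : x ↦ x + [1/m]`. -/
def tau (m : ℕ) : S1 ≃ₜ S1 := Homeomorph.addLeft ((((m : ℝ)⁻¹ : ℝ) : S1))

/-- The point `[1/m] ∈ S¹`. -/
def um (m : ℕ) : S1 := (((m : ℝ)⁻¹ : ℝ) : S1)

/-- `F` is the `z_m`-lift of `f`: `F_α(m·x) = m·f_α(x)`. -/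
def IsZLift (m : ℕ) (f F : RandomCircleHomeo Δ) : Prop :=
  ∀ α (x : S1), F.homeo α (m • x) = m • (f.homeo α x)

/-- The unique point of `[[0], [1/m][` whose `m`-th multiple is `y`. -/
def mRoot (m : ℕ) (y : S1) : S1 := ((rep y / m : ℝ) : S1)

/-- Anticlockwise enumeration of a finite family of closed arcs:
`C i = [a i, b i]` with distinct endpoints, the arcs are pairwise disjoint, and
the open gap between consecutive arcs meets none of the arcs. -/
def AnticlockwiseArcs {k : ℕ} (C : Fin k → Set S1) (a b : Fin k → S1) : Prop :=
  (∀ i, C i = cIcc (a i) (b i)) ∧ (∀ i, a i ≠ b i) ∧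
  (Pairwise fun i j => Disjoint (C i) (C j)) ∧
  (∀ i : Fin k, (⋃ j, C j) ∩ cIoo (b i) (a ⟨(i.1 + 1) % k, Nat.mod_lt _ i.pos⟩) = ∅)

/-- The structure data `(k, l)` of `f` (Proposition 2.4): the union of the minimal
sets has exactly `k` connected components `C 0, …, C (k-1)`, listed in anticlockwise
order, and `f_α(C i) ⊆ C (i + l mod k)` for all `α, i`. -/
def StructureData (f : RandomCircleHomeo Δ) (k l : ℕ) : Prop :=
  0 < k ∧ l < k ∧
  ∃ C : Fin k → Set S1,
    Function.Injective C ∧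
    (Set.range C = {s | ∃ x ∈ minimalUnion f, s = connectedComponentIn (minimalUnion f) x}) ∧
    (k = 1 ∨ ∃ a b : Fin k → S1, AnticlockwiseArcs C a b) ∧
    (∀ α (i : Fin k), f.homeo α '' C i ⊆ C ⟨(i.1 + l) % k, Nat.mod_lt _ i.pos⟩)

variable {Δ : Type*} [TopologicalSpace Δ] [PolishSpace Δ] [ConnectedSpace Δ]
  [MeasurableSpace Δ] [BorelSpace Δ]

/-! The image of the minimal arc `G` under a homeomorphism `τ` commuting with every `f_α` is again
minimal, hence equals `G` by uniqueness; removing a point outside `G` turns `G` into a compact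
interval of `ℝ` mapped into itself by `τ`, so `τ` fixes a point of `G`. A lift of an
orientation-preserving `τ` can be normalised to fix a lift `x₀` of that point, so it preserves
`[x₀, x₀ + 1)`; if moreover `τ^[k] = id`, the `k`-th iterate of the lift is the identity there,
and a strictly monotone map with a periodic point fixes it. Hence a symmetry would be `id`. -/

open Function

theorem IsConnected.exists_isFixedPt_of_mapsTo {α : Type*} [ConditionallyCompleteLinearOrder α]
    [TopologicalSpace α] [OrderTopology α] [DenselyOrdered α] {K : Set α} {g : α → α}
    (hK : IsConnected K) (hKc : IsCompact K) (hg : ContinuousOn g K) (hmaps : MapsTo g K K) :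
    ∃ c ∈ K, IsFixedPt g c := by
  have hIcc := eq_Icc_of_connected_compact hK hKc
  obtain ⟨c, hc⟩ := hK.nonempty
  rw [hIcc] at hg hmaps hc ⊢
  exact exists_mem_Icc_isFixedPt_of_mapsTo hg (hc.1.trans hc.2) hmaps

theorem AddCircle.exists_isFixedPt_of_mapsTo {p : ℝ} [Fact (0 < p)] {G : Set (AddCircle p)}
    {g : AddCircle p → AddCircle p} (hG : IsConnected G) (hGc : IsClosed G) (hGne : G ≠ univ)
    (hg : ContinuousOn g G) (hmaps : MapsTo g G G) : ∃ x ∈ G, IsFixedPt g x := by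
  obtain ⟨q, hq⟩ := (ne_univ_iff_exists_notMem G).1 hGne
  obtain ⟨a, rfl⟩ := QuotientAddGroup.mk_surjective q
  -- Away from `a`, the circle is the interval `(a, a + p)` through `e`.
  set e := AddCircle.openPartialHomeomorphCoe p a
  have hGt : G ⊆ e.target := fun x hx hxa => hq (hxa ▸ hx)
  have he_symm : ContinuousOn e.symm G := e.continuousOn_symm.mono hGt
  have he : ContinuousOn e (e.symm '' G) :=
    e.continuousOn.mono ((e.mapsTo_symm.mono_left hGt).image_subset)
  have he_maps : MapsTo e (e.symm '' G) G := by
    rintro _ ⟨y, hy, rfl⟩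
    rwa [e.right_inv (hGt hy)]
  obtain ⟨_, ⟨x, hx, rfl⟩, hfix⟩ := IsConnected.exists_isFixedPt_of_mapsTo
    (hG.image _ he_symm) (hGc.isCompact.image_of_continuousOn he_symm)
    (he_symm.comp (hg.comp he he_maps) (hmaps.comp he_maps))
    ((mapsTo_image e.symm G).comp (hmaps.comp he_maps))
  refine ⟨x, hx, e.symm.injOn (hGt (hmaps hx)) (hGt hx) ?_⟩
  simpa [IsFixedPt, e.right_inv (hGt hx)] using hfix

namespace RandomCircleHomeo

theorem IsInvariant.preimage {Δ : Type*} [TopologicalSpace Δ] {f : RandomCircleHomeo Δ}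
    {G : Set S1} {h : S1 → S1} (hG : f.IsInvariant G) (hh : Continuous h)
    (hcomm : ∀ α x, h (f.homeo α x) = f.homeo α (h x)) : f.IsInvariant (h ⁻¹' G) := by
  refine ⟨hG.1.preimage hh, fun α => ?_⟩
  rintro _ ⟨x, hx, rfl⟩
  simpa [hcomm] using hG.2 α ⟨h x, hx, rfl⟩

theorem IsMinimal.image_homeomorph {Δ : Type*} [TopologicalSpace Δ] {f : RandomCircleHomeo Δ}
    {G : Set S1} (hG : f.IsMinimal G) (τ : S1 ≃ₜ S1)
    (hcomm : ∀ α x, τ (f.homeo α x) = f.homeo α (τ x)) : f.IsMinimal (τ '' G) := by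
  have hcomm_symm : ∀ α x, τ.symm (f.homeo α x) = f.homeo α (τ.symm x) := fun α x =>
    τ.injective (by simp [hcomm])
  refine ⟨?_, hG.2.1.image τ, fun G' hG' hinv hne => ?_⟩
  · rw [τ.image_eq_preimage_symm]
    exact hG.1.preimage τ.symm.continuous hcomm_symm
  · have hpre : τ ⁻¹' G' = G :=
      hG.2.2 _ (fun x hx => τ.injective.mem_set_image.1 (hG' hx))
        (hinv.preimage τ.continuous hcomm) (hne.preimage τ.surjective)
    rw [← hpre, τ.image_preimage]

end RandomCircleHomeo

theorem OrientationPreserving.exists_lift_apply_eq_self {τ : S1 ≃ₜ S1}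
    (hτ : OrientationPreserving τ) {x₀ : ℝ} (hx₀ : τ x₀ = x₀) :
    ∃ H : ℝ → ℝ, StrictMono H ∧ (∀ y, H (y + 1) = H y + 1) ∧
      (∀ y : ℝ, τ y = H y) ∧ H x₀ = x₀ := by
  obtain ⟨H, hH, hper, hlift⟩ := hτ
  set c := H x₀ - x₀
  have hc : (c : S1) = 0 := by rw [AddCircle.coe_sub, ← hlift, hx₀, sub_self]
  refine ⟨fun y => H y - c, fun y z hyz => sub_lt_sub_right (hH hyz) c,
    fun y => by simp only [hper]; ring, fun y => ?_, by simp [c]⟩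
  rw [AddCircle.coe_sub, hc, sub_zero, hlift]

theorem OrientationPreserving.eq_id_of_isFixedPt_of_iterate_eq_id {τ : S1 ≃ₜ S1}
    (hτ : OrientationPreserving τ) {k : ℕ} (hk : 0 < k) (hiter : (⇑τ)^[k] = id) {x : S1}
    (hx : IsFixedPt τ x) : ⇑τ = id := by
  obtain ⟨x₀, rfl⟩ := QuotientAddGroup.mk_surjective x
  obtain ⟨H, hH, hper, hlift, hH₀⟩ := hτ.exists_lift_apply_eq_self hx
  have hHk_coe : ∀ y : ℝ, ((H^[k] y : ℝ) : S1) = y := fun y => by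
    rw [(Semiconj.iterate_right (fun y => (hlift y).symm) k) y, hiter, id]
  have hHk_maps : MapsTo H^[k] (Ico x₀ (x₀ + 1)) (Ico x₀ (x₀ + 1)) := fun y hy =>
    ⟨iterate_fixed hH₀ k ▸ (hH.iterate k).monotone hy.1,
      iterate_fixed (show H (x₀ + 1) = x₀ + 1 by rw [hper, hH₀]) k ▸ hH.iterate k hy.2⟩
  have hH_fix : ∀ y ∈ Ico x₀ (x₀ + 1), H y = y := fun y hy =>
    (Commute.id_right.iterate_pos_eq_iff_map_eq hH.monotone strictMono_id hk).1 <| by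
      rw [iterate_id]
      exact (AddCircle.coe_eq_coe_iff_of_mem_Ico (hHk_maps hy) hy).1 (hHk_coe y)
  funext z
  obtain ⟨y, hy, rfl⟩ : z ∈ ((↑) : ℝ → S1) '' Ico x₀ (x₀ + 1) := by
    rw [AddCircle.coe_image_Ico_eq]; trivial
  rw [hlift, hH_fix y hy, id]

theorem arc_minimal_no_symmetry_general
    (f : RandomCircleHomeo Δ) (G : Set S1)
    (hmin : f.IsMinimal G) (huniq : ∀ G', f.IsMinimal G' → G' = G)
    (hconn : IsConnected G) (hproper : G ≠ Set.univ) :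
    (∀ τ : S1 ≃ₜ S1, OrientationPreserving τ →
      (∀ α x, τ (f.homeo α x) = f.homeo α (τ x)) → ∃ x ∈ G, τ x = x) ∧
    ¬ ∃ τ : S1 ≃ₜ S1, IsSymmetry f τ := by
  have hfix : ∀ τ : S1 ≃ₜ S1, (∀ α x, τ (f.homeo α x) = f.homeo α (τ x)) →
      ∃ x ∈ G, τ x = x := by
    intro τ hcomm
    have hτG : τ '' G = G := huniq _ (hmin.image_homeomorph τ hcomm)
    exact AddCircle.exists_isFixedPt_of_mapsTo hconn hmin.1.1 hproper τ.continuous.continuousOn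
      fun x hx => hτG ▸ mem_image_of_mem τ hx
  refine ⟨fun τ _ hcomm => hfix τ hcomm, ?_⟩
  rintro ⟨τ, hτ, hτ_ne, ⟨k, hk, hiter⟩, hcomm⟩
  obtain ⟨x, -, hx⟩ := hfix τ hcomm
  exact hτ_ne (hτ.eq_id_of_isFixedPt_of_iterate_eq_id hk hiter hx)

/-- if the unique minimal set of `f` is an arc, then every
orientation-preserving homeomorphism commuting with all the `f_α` has a fixed point
in the arc; in particular `f` admits no symmetry. -/
theorem arc_minimal_no_symmetry
    (ν : Measure Δ) [IsProbabilityMeasure ν] [ν.IsOpenPosMeasure]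
    (f : RandomCircleHomeo Δ) (G : Set S1)
    (hmin : f.IsMinimal G) (huniq : ∀ G', f.IsMinimal G' → G' = G)
    (hconn : IsConnected G) (hproper : G ≠ Set.univ) (hnotpt : ∀ x : S1, G ≠ {x}) :
    (∀ τ : S1 ≃ₜ S1, OrientationPreserving τ →
      (∀ α x, τ (f.homeo α x) = f.homeo α (τ x)) → ∃ x ∈ G, τ x = x) ∧
    ¬ ∃ τ : S1 ≃ₜ S1, IsSymmetry f τ :=
  arc_minimal_no_symmetry_general f G hmin huniq hconn hproper

end RandomCircle
end
end

section
/- Let f be a random circle homeomorphism. If S¹ is f-minimal, then for every n ∈ ℕ, S¹ is fⁿ-minimal, where fⁿ is the random map over (Δⁿ, ν^⊗n) given by fⁿ_{(α_0,…,α_{n−1})} = f_{α_{n−1}} ∘ ⋯ ∘ f_{α_0}. -/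
open MeasureTheory Filter Topology Set
open scoped ENNReal

noncomputable section

namespace RandomCircle

variable {Δ : Type*} [TopologicalSpace Δ]

variable [MeasurableSpace Δ]

variable {Δ : Type*} [TopologicalSpace Δ] [PolishSpace Δ] [ConnectedSpace Δ]
  [MeasurableSpace Δ] [BorelSpace Δ]

/-!
Let `T B` be the closure of `⋃ α, f_α(B)`, so that a closed set is `fⁿ`-invariant exactly when
`Tⁿ B ⊆ B`. By compactness and Zorn, a closed `fⁿ`-invariant `G` contains a minimal one `M`,
and then `Tⁿ M = M`. The sets `M, T M, …, T^{n-1} M` cover a closed `f`-invariant set, hence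
the whole circle, and each of them either contains `M` (whence it equals `M`) or misses it.
So `M` is clopen, and the circle is connected.
-/

section ImageClosure

variable {X ι : Type*} [TopologicalSpace X]

def imageClosure (φ : ι → X → X) (B : Set X) : Set X :=
  closure (⋃ i, φ i '' B)

def IsNonemptyClosedInvariant (S : Set X → Set X) (B : Set X) : Prop :=
  IsClosed B ∧ B.Nonempty ∧ S B ⊆ B

variable (φ : ι → X → X)

lemma monotone_imageClosure : Monotone (imageClosure φ) := fun _ _ h =>
  closure_mono (iUnion_mono fun _ => image_mono h)

lemma image_subset_imageClosure (B : Set X) (i : ι) : φ i '' B ⊆ imageClosure φ B :=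
  (subset_iUnion (fun i => φ i '' B) i).trans subset_closure

lemma imageClosure_iUnion {κ : Type*} [Finite κ] (A : κ → Set X) :
    imageClosure φ (⋃ k, A k) = ⋃ k, imageClosure φ (A k) := by
  simp only [imageClosure, image_iUnion]
  rw [iUnion_comm, closure_iUnion_of_finite]

lemma isClosed_iterate_imageClosure {A : Set X} (hA : IsClosed A) :
    ∀ j, IsClosed ((imageClosure φ)^[j] A)
  | 0 => hA
  | j + 1 => by
    rw [Function.iterate_succ_apply']
    exact isClosed_closure

lemma iterate_imageClosure_nonempty [Nonempty ι] {A : Set X} (hA : A.Nonempty) :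
    ∀ j, ((imageClosure φ)^[j] A).Nonempty
  | 0 => hA
  | j + 1 => by
    obtain ⟨x, hx⟩ := iterate_imageClosure_nonempty hA j
    obtain ⟨i⟩ := ‹Nonempty ι›
    rw [Function.iterate_succ_apply']
    exact ⟨φ i x, image_subset_imageClosure φ _ i ⟨x, hx, rfl⟩⟩

lemma exists_minimal_nonemptyClosedInvariant_subset [CompactSpace X] {S : Set X → Set X}
    (hS : Monotone S) {G : Set X} (hG : IsNonemptyClosedInvariant S G) :
    ∃ M ⊆ G, Minimal (IsNonemptyClosedInvariant S) M := by
  refine zorn_superset_nonempty {B | IsNonemptyClosedInvariant S B}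
    (fun c hc hchain hne => ?_) G hG
  have : Nonempty c := hne.to_subtype
  refine ⟨⋂₀ c, ⟨isClosed_sInter fun B hB => (hc hB).1, ?_, ?_⟩,
    fun B hB => sInter_subset_of_mem hB⟩
  · exact IsCompact.nonempty_sInter_of_directed_nonempty_isCompact_isClosed
      (IsChain.directedOn (r := fun A B : Set X => A ⊇ B) hchain.symm) (fun B hB => (hc hB).2.1)
      (fun B hB => (hc hB).1.isCompact) (fun B hB => (hc hB).1)
  · exact subset_sInter fun B hB => (hS (sInter_subset_of_mem hB)).trans (hc hB).2.2

variable {φ} {n : ℕ} {M : Set X}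

lemma isPeriodicPt_imageClosure_of_minimal [Nonempty ι]
    (hM : Minimal (IsNonemptyClosedInvariant (imageClosure φ)^[n]) M) :
    Function.IsPeriodicPt (imageClosure φ) n M := by
  have hsub := hM.1.2.2
  exact hM.eq_of_subset ⟨isClosed_iterate_imageClosure φ hM.1.1 n,
    iterate_imageClosure_nonempty φ hM.1.2.1 n, ((monotone_imageClosure φ).iterate n) hsub⟩ hsub

/-- Minimality gives `M ⊆ Tʲ M`; then `Tʲ M ⊆ T^{jn} M = M`, as `k ↦ T^{jk} M` is monotone. -/
lemma iterate_imageClosure_eq_of_minimal_of_not_disjoint [Nonempty ι] (hn : 0 < n)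
    (hM : Minimal (IsNonemptyClosedInvariant (imageClosure φ)^[n]) M) {j : ℕ}
    (hj : ¬ Disjoint M ((imageClosure φ)^[j] M)) : (imageClosure φ)^[j] M = M := by
  set T := imageClosure φ
  have hper := isPeriodicPt_imageClosure_of_minimal hM
  have hTj : T^[n] (T^[j] M) = T^[j] M := by
    rw [← Function.iterate_add_apply, add_comm, Function.iterate_add_apply, hper.eq]
  have hM_sub : M ⊆ T^[j] M := by
    refine (hM.eq_of_subset ⟨hM.1.1.inter (isClosed_iterate_imageClosure φ hM.1.1 j),
      not_disjoint_iff_nonempty_inter.1 hj, ?_⟩ inter_subset_left).symm.subset.trans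
      inter_subset_right
    calc T^[n] (M ∩ T^[j] M) ⊆ T^[n] M ∩ T^[n] (T^[j] M) :=
          ((monotone_imageClosure φ).iterate n).map_inf_le M _
      _ = M ∩ T^[j] M := by rw [hper.eq, hTj]
  refine hM_sub.antisymm' ?_
  calc T^[j] M = (T^[j])^[1] M := rfl
    _ ⊆ (T^[j])^[n] M :=
        ((monotone_imageClosure φ).iterate j).monotone_iterate_of_le_map hM_sub hn
    _ = M := by rw [← Function.iterate_mul, (hper.const_mul j).eq]

lemma isOpen_of_finite_closed_cover {κ : Type*} [Finite κ] {A : κ → Set X} {M : Set X}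
    (hA : ∀ k, IsClosed (A k)) (hcover : ⋃ k, A k = univ)
    (hM : ∀ k, ¬ Disjoint M (A k) → A k ⊆ M) : IsOpen M := by
  have hcompl : Mᶜ = ⋃ (k) (_ : Disjoint M (A k)), A k := by
    refine subset_antisymm (fun x hx => ?_) (iUnion₂_subset fun k hk => hk.subset_compl_left)
    obtain ⟨k, hxk⟩ := mem_iUnion.1 (hcover.symm ▸ mem_univ x)
    exact mem_iUnion₂.2 ⟨k, of_not_not fun hk => hx (hM k hk hxk), hxk⟩
  rw [← isClosed_compl_iff, hcompl]
  exact isClosed_iUnion_of_finite fun k => isClosed_iUnion_of_finite fun _ => hA k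

theorem eq_univ_of_iterate_imageClosure_subset [CompactSpace X] [ConnectedSpace X] [Nonempty ι]
    (hmin : ∀ B : Set X, IsClosed B → B.Nonempty → (∀ i, φ i '' B ⊆ B) → B = univ)
    (hn : 0 < n) {G : Set X} (hG : IsNonemptyClosedInvariant (imageClosure φ)^[n] G) :
    G = univ := by
  obtain ⟨M, hMG, hM⟩ :=
    exists_minimal_nonemptyClosedInvariant_subset ((monotone_imageClosure φ).iterate n) hG
  have hper := isPeriodicPt_imageClosure_of_minimal hM
  have hclosed := isClosed_iterate_imageClosure φ hM.1.1
  have hcover : ⋃ j : Fin n, (imageClosure φ)^[j] M = univ := by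
    refine hmin _ (isClosed_iUnion_of_finite fun j => hclosed j)
      ⟨_, mem_iUnion.2 ⟨⟨0, hn⟩, hM.1.2.1.some_mem⟩⟩ fun i => ?_
    refine (image_subset_imageClosure φ _ i).trans ?_
    rw [imageClosure_iUnion]
    refine iUnion_subset fun j => ?_
    rw [← Function.iterate_succ_apply' (imageClosure φ), ← hper.iterate_mod_apply]
    exact subset_iUnion (fun j : Fin n => (imageClosure φ)^[j] M) ⟨(j + 1) % n, Nat.mod_lt _ hn⟩
  have hMopen : IsOpen M := isOpen_of_finite_closed_cover (fun j : Fin n => hclosed j) hcover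
    fun j hj => (iterate_imageClosure_eq_of_minimal_of_not_disjoint hn hM hj).subset
  exact eq_univ_of_univ_subset (IsClopen.eq_univ ⟨hM.1.1, hMopen⟩ hM.1.2.1 ▸ hMG)

end ImageClosure

lemma iterate_imageClosure_subset_closure_fwdFin {E : Type*} [TopologicalSpace E]
    (f : RandomCircleHomeo E) (A : Set S1) :
    ∀ n, (imageClosure fun α => f.homeo α)^[n] A ⊆ closure (⋃ a : Fin n → E, fwdFin f a '' A)
  | 0 => subset_closure.trans' fun x hx => mem_iUnion.2 ⟨Fin.elim0, x, hx, rfl⟩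
  | n + 1 => by
    rw [Function.iterate_succ_apply']
    refine ((monotone_imageClosure _) (iterate_imageClosure_subset_closure_fwdFin f A n)).trans
      (closure_minimal (iUnion_subset fun α => ?_) isClosed_closure)
    refine (image_closure_subset_closure_image (f.homeo α).continuous).trans (closure_mono ?_)
    rintro _ ⟨_, hy, rfl⟩
    obtain ⟨a, x, hx, rfl⟩ := mem_iUnion.1 hy
    refine mem_iUnion.2 ⟨Fin.snoc a α, x, hx, ?_⟩
    simp [fwdFin]

theorem minimal_iterates_general
    (f : RandomCircleHomeo Δ) (hmin : f.IsMinimal Set.univ) :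
    ∀ n : ℕ, 0 < n → ∀ G : Set S1, IsClosed G → G.Nonempty →
      (∀ a : Fin n → Δ, fwdFin f a '' G ⊆ G) → G = Set.univ := by
  intro n hn G hGc hGne hG
  refine eq_univ_of_iterate_imageClosure_subset
    (fun B hBc hBne hB => hmin.2.2 B (subset_univ B) ⟨hBc, hB⟩ hBne) hn ⟨hGc, hGne, ?_⟩
  exact (iterate_imageClosure_subset_closure_fwdFin f G n).trans
    (closure_minimal (iUnion_subset hG) hGc)

/-- Proposition 3.1: if `S¹` is `f`-minimal then `S¹` is `fⁿ`-minimal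
for every `n ∈ ℕ`. -/
theorem minimal_iterates
    (ν : Measure Δ) [IsProbabilityMeasure ν] [ν.IsOpenPosMeasure]
    (f : RandomCircleHomeo Δ) (hmin : f.IsMinimal Set.univ) :
    ∀ n : ℕ, 0 < n → ∀ G : Set S1, IsClosed G → G.Nonempty →
      (∀ a : Fin n → Δ, fwdFin f a '' G ⊆ G) → G = Set.univ :=
  minimal_iterates_general f hmin

end RandomCircle
end
end

section
/- Let f be a random circle homeomorphism. If S¹ is f-minimal, then S¹ is also f^{−1}-minimal, where f^{−1} := (f_α^{−1})_{α∈Δ}. -/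
open MeasureTheory Filter Topology Set
open scoped ENNReal

noncomputable section

namespace RandomCircle

variable {Δ : Type*} [TopologicalSpace Δ]

variable [MeasurableSpace Δ]

variable {Δ : Type*} [TopologicalSpace Δ] [PolishSpace Δ] [ConnectedSpace Δ]
  [MeasurableSpace Δ] [BorelSpace Δ]

/-!
If `G ≠ S¹` is closed and `f⁻¹`-invariant, then `U = S¹ \ G` is open, nonempty and
`f`-invariant. Since `Δ` is connected, all the `f_α` map a component of `U` into one and the same
component. Iterating a fixed `f_α` from a point of `U` gives a sequence of components `I₀, I₁, …`
whose union is dense by minimality, so it returns: `Iₙ = I₀`. The closure of `I₀ ∪ ⋯ ∪ Iₙ₋₁` is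
closed and `f`-invariant, hence all of `S¹`, and `G` lies in the frontiers of these arcs, which
are finite. An injective self-map of a finite set is onto, so `G` is `f`-invariant as well,
and minimality of `S¹` applies to it.
-/

instance _root_.AddCircle.locallyConnectedSpace (p : ℝ) : LocallyConnectedSpace (AddCircle p) :=
  (QuotientAddGroup.isQuotientMap_mk _).isCoinducing.locallyConnectedSpace

/-- Off a point `↑a ∉ V` the circle is the interval `(a, a + p)`, where `V` becomes an interval:
its frontier consists of the images of the two endpoints. -/
theorem _root_.AddCircle.frontier_finite_of_isPreconnected {p : ℝ} [Fact (0 < p)]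
    {V : Set (AddCircle p)} (hV : IsPreconnected V) : (frontier V).Finite := by
  rcases eq_or_ne V univ with rfl | hV_ne_univ
  · simp
  rcases V.eq_empty_or_nonempty with rfl | hV_ne
  · simp
  obtain ⟨g, hg⟩ := (ne_univ_iff_exists_notMem V).mp hV_ne_univ
  obtain ⟨a, rfl⟩ := QuotientAddGroup.mk_surjective g
  let e := AddCircle.openPartialHomeomorphCoe p a
  have hVt : V ⊆ e.target := fun v hv hva => hg (hva ▸ hv)
  set W := e.symm '' V
  have hW : IsConnected W := ⟨hV_ne.image _, hV.image _ (e.continuousOn_symm.mono hVt)⟩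
  have hWs : W ⊆ e.source := e.symm_image_target_eq_source ▸ image_mono hVt
  have hWb : Bornology.IsBounded W := (Metric.isBounded_Ioo a (a + p)).subset hWs
  have hWV : e '' W = V := e.image_symm_image_of_subset_target hVt
  have hIoo : Ioo (sInf W) (sSup W) ⊆ W := hW.Ioo_csInf_csSup_subset hWb.bddBelow hWb.bddAbove
  have h_int : e '' Ioo (sInf W) (sSup W) ⊆ interior V :=
    interior_maximal (hWV ▸ image_mono hIoo)
      (e.isOpen_image_of_subset_source isOpen_Ioo (hIoo.trans hWs))
  have h_cl : closure V ⊆ e '' Icc (sInf W) (sSup W) :=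
    closure_minimal (hWV ▸ image_mono (subset_Icc_csInf_csSup hWb.bddBelow hWb.bddAbove))
      (isCompact_Icc.image (AddCircle.continuous_mk' p)).isClosed
  refine ((finite_singleton (e (sSup W))).insert (e (sInf W))).subset fun y hy => ?_
  obtain ⟨t, ht, rfl⟩ := h_cl hy.1
  rcases eq_endpoints_or_mem_Ioo_of_mem_Icc ht with rfl | rfl | ht
  · exact mem_insert _ _
  · exact mem_insert_of_mem _ rfl
  · exact absurd (h_int ⟨t, ht, rfl⟩) hy.2

namespace RandomCircleHomeo

variable {Δ : Type*} [TopologicalSpace Δ] (f : RandomCircleHomeo Δ)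

theorem dense_of_isMinimal_univ (hmin : f.IsMinimal univ) {T : Set S1}
    (hT : ∀ α, MapsTo (f.homeo α) T T) (hT_ne : T.Nonempty) : Dense T :=
  dense_iff_closure_eq.2 <| hmin.2.2 _ (subset_univ _)
    ⟨isClosed_closure, fun α => ((f.homeo α).image_closure T).subset.trans
      (closure_mono (hT α).image_subset)⟩
    hT_ne.closure

/-- The image of `Δ × C` under `(α, z) ↦ f_α z` is connected. -/
theorem mapsTo_connectedComponentIn [ConnectedSpace Δ] {U : Set S1}
    (hU : ∀ α, MapsTo (f.homeo α) U U) {x : S1} (hx : x ∈ U) (α β : Δ) :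
    MapsTo (f.homeo α) (connectedComponentIn U x) (connectedComponentIn U (f.homeo β x)) := by
  let F : Δ × S1 → S1 := fun p => f.homeo p.1 p.2
  have hpre : IsPreconnected (F '' (univ ×ˢ connectedComponentIn U x)) :=
    (isPreconnected_univ.prod isPreconnected_connectedComponentIn).image _ f.cont.continuousOn
  have hsub : F '' (univ ×ˢ connectedComponentIn U x) ⊆ U := by
    rintro _ ⟨⟨γ, z⟩, ⟨-, hz⟩, rfl⟩
    exact hU γ (connectedComponentIn_subset _ _ hz)
  intro z hz
  exact hpre.subset_connectedComponentIn ⟨(β, x), ⟨trivial, mem_connectedComponentIn hx⟩, rfl⟩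
    hsub ⟨(α, z), ⟨trivial, hz⟩, rfl⟩

theorem mapsTo_connectedComponentIn_iterate [ConnectedSpace Δ] {U : Set S1}
    (hU : ∀ α, MapsTo (f.homeo α) U U) {x : S1} (hx : x ∈ U) (α a : Δ) (k : ℕ) :
    MapsTo (f.homeo α) (connectedComponentIn U ((f.homeo a)^[k] x))
      (connectedComponentIn U ((f.homeo a)^[k + 1] x)) := by
  rw [Function.iterate_succ_apply']
  exact f.mapsTo_connectedComponentIn hU ((hU a).iterate k hx) α a

theorem exists_iterate_connectedComponentIn_eq [ConnectedSpace Δ] (hmin : f.IsMinimal univ)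
    {U : Set S1} (hUo : IsOpen U) (hU : ∀ α, MapsTo (f.homeo α) U U) {x : S1} (hx : x ∈ U)
    (a : Δ) :
    ∃ n, 0 < n ∧ connectedComponentIn U ((f.homeo a)^[n] x) = connectedComponentIn U x := by
  let I : ℕ → Set S1 := fun k => connectedComponentIn U ((f.homeo a)^[k] x)
  have hT : ∀ α, MapsTo (f.homeo α) (⋃ k, I (k + 1)) (⋃ k, I (k + 1)) := fun α z hz => by
    obtain ⟨k, hk⟩ := mem_iUnion.1 hz
    exact mem_iUnion.2 ⟨k + 1, f.mapsTo_connectedComponentIn_iterate hU hx α a (k + 1) hk⟩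
  have hT_ne : (⋃ k, I (k + 1)).Nonempty :=
    ⟨_, mem_iUnion.2 ⟨0, mem_connectedComponentIn ((hU a).iterate 1 hx)⟩⟩
  obtain ⟨y, hyT, hy⟩ := (f.dense_of_isMinimal_univ hmin hT hT_ne).exists_mem_open
    hUo.connectedComponentIn ⟨x, mem_connectedComponentIn hx⟩
  obtain ⟨k, hyk⟩ := mem_iUnion.1 hyT
  exact ⟨k + 1, k.succ_pos, (connectedComponentIn_eq hyk).trans (connectedComponentIn_eq hy).symm⟩

theorem finite_compl_of_mapsTo [ConnectedSpace Δ] (hmin : f.IsMinimal univ) (a : Δ)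
    {U : Set S1} (hUo : IsOpen U) (hU : ∀ α, MapsTo (f.homeo α) U U) (hU_ne : U.Nonempty) :
    Uᶜ.Finite := by
  obtain ⟨x, hx⟩ := hU_ne
  obtain ⟨n, hn, hper⟩ := f.exists_iterate_connectedComponentIn_eq hmin hUo hU hx a
  let I : ℕ → Set S1 := fun k => connectedComponentIn U ((f.homeo a)^[k] x)
  let S := ⋃ k ∈ Finset.range n, closure (I k)
  have hS_closed : IsClosed S := isClosed_biUnion_finset fun k _ => isClosed_closure
  have hS_inv : ∀ α, MapsTo (f.homeo α) S S := fun α z hz => by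
    simp only [S, mem_iUnion, Finset.mem_range] at hz ⊢
    obtain ⟨k, hk, hzk⟩ := hz
    have h := (f.mapsTo_connectedComponentIn_iterate hU hx α a k).closure (f.homeo α).continuous hzk
    rcases (Nat.succ_le_of_lt hk).lt_or_eq with hk' | rfl
    · exact ⟨k + 1, hk', h⟩
    · have hI : I (k + 1) = I 0 := hper
      exact ⟨0, hn, hI ▸ h⟩
  have hS_ne : S.Nonempty :=
    ⟨x, mem_biUnion (Finset.mem_range.2 hn) (subset_closure (mem_connectedComponentIn hx))⟩
  have hS : S = univ :=
    hS_closed.closure_eq.symm.trans (f.dense_of_isMinimal_univ hmin hS_inv hS_ne).closure_eq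
  have hI_fin : ∀ k, (frontier (I k)).Finite := fun k =>
    AddCircle.frontier_finite_of_isPreconnected isPreconnected_connectedComponentIn
  refine ((Finset.range n).finite_toSet.biUnion fun k _ => hI_fin k).subset fun z hz => ?_
  obtain ⟨k, hk, hzk⟩ := mem_iUnion₂.1 (hS ▸ mem_univ z : z ∈ S)
  exact mem_biUnion hk ⟨hzk, fun hz' => hz (connectedComponentIn_subset _ _ (interior_subset hz'))⟩

variable {f}

theorem IsInvInvariant.mapsTo_compl {G : Set S1} (hG : f.IsInvInvariant G) (α : Δ) :
    MapsTo (f.homeo α) Gᶜ Gᶜ :=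
  fun z hz hfz => hz (by simpa using hG.2 α (mem_image_of_mem _ hfz))

theorem IsInvInvariant.isInvariant_of_finite {G : Set S1} (hG : f.IsInvInvariant G)
    (hG_fin : G.Finite) : f.IsInvariant G := by
  refine ⟨hG.1, fun α => ?_⟩
  have hbij : BijOn (f.homeo α).symm G G :=
    (hG_fin.injOn_iff_bijOn_of_mapsTo (mapsTo_iff_image_subset.2 (hG.2 α))).1
      (f.homeo α).symm.injective.injOn
  rintro _ ⟨z, hz, rfl⟩
  obtain ⟨w, hw, rfl⟩ := hbij.surjOn hz
  simpa using hw

theorem IsInvInvariant.isInvariant [ConnectedSpace Δ] (hmin : f.IsMinimal univ) {G : Set S1}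
    (hG : f.IsInvInvariant G) : f.IsInvariant G := by
  rcases isEmpty_or_nonempty Δ with _ | ⟨⟨a⟩⟩
  · exact ⟨hG.1, fun α => isEmptyElim α⟩
  rcases eq_or_ne G univ with rfl | hG_ne
  · exact ⟨isClosed_univ, fun _ => subset_univ _⟩
  refine hG.isInvariant_of_finite ?_
  simpa using f.finite_compl_of_mapsTo hmin a hG.1.isOpen_compl hG.mapsTo_compl
    (nonempty_compl.2 hG_ne)

end RandomCircleHomeo

theorem minimal_inverse_general
    (f : RandomCircleHomeo Δ) (hmin : f.IsMinimal Set.univ) :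
    f.IsInvMinimal Set.univ :=
  ⟨⟨isClosed_univ, fun _ => subset_univ _⟩, univ_nonempty,
    fun G _ hG hG_ne => hmin.2.2 G (subset_univ G) (hG.isInvariant hmin) hG_ne⟩

/-- Lemma 3.4: if `S¹` is `f`-minimal then `S¹` is `f⁻¹`-minimal. -/
theorem minimal_inverse
    (ν : Measure Δ) [IsProbabilityMeasure ν] [ν.IsOpenPosMeasure]
    (f : RandomCircleHomeo Δ) (hmin : f.IsMinimal Set.univ) :
    f.IsInvMinimal Set.univ :=
  minimal_inverse_general f hmin

end RandomCircle
end
end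

section
/- Let (Ω, F, ℙ) be a probability space with a measure-preserving map θ such that ℙ is ergodic with respect to θ. Let (X, +) be a compact metrisable abelian topological group with Haar probability measure λ, let r: Ω → X be measurable, and define Θ: Ω × X → Ω × X by Θ(ω,x) = (θω, x + r(ω)). If ℙ ⊗ λ is ergodic with respect to Θ, then ℙ ⊗ λ is the only Θ-invariant probability measure on Ω × X whose Ω-marginal is ℙ. -/
open MeasureTheory Filter Topology Set
open scoped ENNReal

noncomputable section

namespace RandomCircle

variable {Δ : Type*} [TopologicalSpace Δ]

variable [MeasurableSpace Δ]

/-! Fix a `Θ`-invariant `μ` with marginal `ℙ`. Translations in the fibre commute with `Θ`, so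
smearing `μ` by the translations `x ↦ x + g`, `g ∈ A`, gives a `Θ`-invariant measure; smearing over
all of `X` gives `ℙ ⊗ λ` by invariance of Haar measure, so the smeared measure is absolutely
continuous with respect to the ergodic measure `ℙ ⊗ λ` and is therefore `λ(A) • (ℙ ⊗ λ)`.
Consequently, for a test function `F` the integrals `g ↦ ∫ F(ω, x + g) dμ` agree `λ`-a.e. with
`∫ F d(ℙ ⊗ λ)`. For `F = 1_E ⊗ f` with `f` bounded continuous they depend continuously on `g`, so
they agree at `g = 0`, and these integrals determine `μ`. -/

open scoped BoundedContinuousFunction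

theorem _root_.norm_indicator_one_mul_le {Ω X : Type*} [TopologicalSpace X] (E : Set Ω)
    (f : X →ᵇ ℝ) (ω : Ω) (x : X) : ‖E.indicator 1 ω * f x‖ ≤ ‖f‖ := by
  by_cases hω : ω ∈ E
  · simpa [hω] using f.norm_coe_le_norm x
  · simp [hω]

theorem _root_.MeasureTheory.MeasurePreserving.map_prod_of_semiconj {Y G : Type*}
    [MeasurableSpace Y] [MeasurableSpace G] {μ : Measure Y} {ν : Measure G} [SFinite μ] [SFinite ν]
    {T : Y → Y} {S : Y × G → Y} (hT : MeasurePreserving T μ μ) (hS : Measurable S)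
    (hST : Function.Semiconj S (Prod.map T id) T) :
    MeasurePreserving T ((μ.prod ν).map S) ((μ.prod ν).map S) := by
  refine ⟨hT.measurable, ?_⟩
  rw [Measure.map_map hT.measurable hS, ← hST.comp_eq,
    ← Measure.map_map hS (hT.measurable.prodMap measurable_id),
    (hT.prod (MeasurePreserving.id ν)).map_eq]

section Product

variable {Ω X : Type*} [MeasurableSpace Ω] [MeasurableSpace X]

theorem _root_.measurable_indicator_one_mul {E : Set Ω} (hE : MeasurableSet E) {f : X → ℝ}
    (hf : Measurable f) : Measurable fun p : Ω × X => E.indicator 1 p.1 * f p.2 :=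
  ((measurable_const.indicator hE).comp measurable_fst).mul (hf.comp measurable_snd)

theorem _root_.MeasureTheory.continuous_integral_indicator_mul_add [TopologicalSpace X]
    [OpensMeasurableSpace X] [AddGroup X] [IsTopologicalAddGroup X] [FirstCountableTopology X]
    (μ : Measure (Ω × X)) [IsFiniteMeasure μ] {E : Set Ω} (hE : MeasurableSet E) (f : X →ᵇ ℝ) :
    Continuous fun g => ∫ p, E.indicator 1 p.1 * f (p.2 + g) ∂μ :=
  continuous_of_dominated (bound := fun _ => ‖f‖)
    (fun g => (measurable_indicator_one_mul hE
      (f.continuous.comp (continuous_add_const g)).measurable).aestronglyMeasurable)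
    (fun g => .of_forall fun p => norm_indicator_one_mul_le E f p.1 (p.2 + g))
    (integrable_const _) (.of_forall fun p => by fun_prop)

theorem _root_.MeasureTheory.Measure.eq_of_integral_indicator_mul_eq [TopologicalSpace X]
    [HasOuterApproxClosed X] [BorelSpace X] {μ ν : Measure (Ω × X)} [IsFiniteMeasure μ]
    [IsFiniteMeasure ν]
    (h : ∀ E : Set Ω, MeasurableSet E → ∀ f : X →ᵇ ℝ,
      ∫ p, E.indicator 1 p.1 * f p.2 ∂μ = ∫ p, E.indicator 1 p.1 * f p.2 ∂ν) :
    μ = ν := by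
  have hrect : ∀ E : Set Ω, MeasurableSet E → ∀ B : Set X, MeasurableSet B →
      μ (E ×ˢ B) = ν (E ×ˢ B) := by
    intro E hE B hB
    have hslice (m : Measure (Ω × X)) (f : X →ᵇ ℝ) :
        ∫ x, f x ∂(m.restrict (E ×ˢ univ)).map Prod.snd = ∫ p, E.indicator 1 p.1 * f p.2 ∂m := by
      rw [integral_map measurable_snd.aemeasurable f.continuous.aestronglyMeasurable,
        ← integral_indicator (hE.prod .univ)]
      congr with p
      by_cases hp : p.1 ∈ E <;> simp [hp]
    have hmarg := ext_of_forall_integral_eq_of_IsFiniteMeasure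
      (μ := (μ.restrict (E ×ˢ univ)).map Prod.snd) (ν := (ν.restrict (E ×ˢ univ)).map Prod.snd)
      fun f => by rw [hslice, hslice, h E hE f]
    have hB' : Prod.snd ⁻¹' B ∩ E ×ˢ univ = E ×ˢ B := by
      ext p; simp [and_comm]
    simpa [Measure.map_apply measurable_snd hB, Measure.restrict_apply (measurable_snd hB), hB']
      using congrArg (· B) hmarg
  refine ext_of_generate_finite _ generateFrom_prod.symm isPiSystem_prod ?_ ?_
  · rintro _ ⟨E, hE, B, hB, rfl⟩
    exact hrect E hE B hB
  · simpa using hrect univ .univ univ .univ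

theorem _root_.MeasureTheory.Measure.map_prod_add_snd [AddGroup X] [MeasurableAdd₂ X]
    (μ : Measure (Ω × X)) [IsFiniteMeasure μ] (ν : Measure X) [SigmaFinite ν]
    [ν.IsAddLeftInvariant] :
    (μ.prod ν).map (fun q => (q.1.1, q.1.2 + q.2)) = (μ.map Prod.fst).prod ν := by
  set S : (Ω × X) × X → Ω × X := fun q => (q.1.1, q.1.2 + q.2)
  have hS : Measurable S := by fun_prop
  refine (Measure.prod_eq fun E B hE hB => ?_).symm
  have hslice (p : Ω × X) :
      ν (Prod.mk p ⁻¹' (S ⁻¹' E ×ˢ B)) = (E ×ˢ univ).indicator (fun _ => ν B) p := by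
    by_cases hp : p.1 ∈ E
    · simpa [S, hp, Set.preimage] using measure_preimage_add ν p.2 B
    · simp [S, hp, Set.preimage]
  rw [Measure.map_apply hS (hE.prod hB), Measure.prod_apply (hS (hE.prod hB)),
    lintegral_congr hslice, lintegral_indicator_const (hE.prod .univ),
    Measure.map_apply measurable_fst hE, Set.prod_univ, mul_comm]

end Product

section SkewRotation

variable {Ω X : Type*} [MeasurableSpace Ω] [AddCommGroup X] [MeasurableSpace X] [MeasurableAdd₂ X]
  {P : Measure Ω} [IsProbabilityMeasure P] {θ : Ω → Ω} {r : Ω → X}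
  {lam : Measure X} [IsProbabilityMeasure lam] [lam.IsAddLeftInvariant]
  {μ : Measure (Ω × X)} [IsProbabilityMeasure μ]

theorem _root_.MeasureTheory.Ergodic.map_prod_restrict_add_snd_eq_smul
    (hErg : Ergodic (fun p : Ω × X => (θ p.1, p.2 + r p.1)) (P.prod lam))
    (hμ : MeasurePreserving (fun p : Ω × X => (θ p.1, p.2 + r p.1)) μ μ)
    (hfst : μ.map Prod.fst = P) (A : Set X) :
    (μ.prod (lam.restrict A)).map (fun q => (q.1.1, q.1.2 + q.2)) = lam A • P.prod lam := by
  set S : (Ω × X) × X → Ω × X := fun q => (q.1.1, q.1.2 + q.2)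
  have hS : Measurable S := by fun_prop
  have hinv := hμ.map_prod_of_semiconj (ν := lam.restrict A) hS fun q => by
    simp [S, add_right_comm]
  have hac : (μ.prod (lam.restrict A)).map S ≪ P.prod lam := by
    rw [← hfst, ← Measure.map_prod_add_snd μ lam]
    exact (Measure.AbsolutelyContinuous.rfl.prod
      (Measure.absolutelyContinuous_of_le Measure.restrict_le_self)).map hS
  obtain ⟨c, hc⟩ := hErg.eq_smul_of_absolutelyContinuous hinv hac
  have hc_univ := congrArg (· univ) hc
  rw [Measure.map_apply hS .univ, preimage_univ, ← univ_prod_univ, Measure.prod_prod] at hc_univ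
  simp only [measure_univ, Measure.restrict_apply .univ, univ_inter, one_mul,
    Measure.smul_apply, smul_eq_mul, mul_one] at hc_univ
  rw [hc, hc_univ]

theorem _root_.MeasureTheory.Ergodic.integrable_comp_add_snd
    (hErg : Ergodic (fun p : Ω × X => (θ p.1, p.2 + r p.1)) (P.prod lam))
    (hμ : MeasurePreserving (fun p : Ω × X => (θ p.1, p.2 + r p.1)) μ μ)
    (hfst : μ.map Prod.fst = P) {F : Ω × X → ℝ} (hF : Integrable F (P.prod lam)) (A : Set X) :
    Integrable (fun q : (Ω × X) × X => F (q.1.1, q.1.2 + q.2)) (μ.prod (lam.restrict A)) := by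
  have hF' : Integrable F ((μ.prod (lam.restrict A)).map fun q => (q.1.1, q.1.2 + q.2)) := by
    rw [hErg.map_prod_restrict_add_snd_eq_smul hμ hfst A]
    exact hF.smul_measure (measure_ne_top lam A)
  exact hF'.comp_measurable (by fun_prop)

theorem _root_.MeasureTheory.Ergodic.setIntegral_integral_add_snd
    (hErg : Ergodic (fun p : Ω × X => (θ p.1, p.2 + r p.1)) (P.prod lam))
    (hμ : MeasurePreserving (fun p : Ω × X => (θ p.1, p.2 + r p.1)) μ μ)
    (hfst : μ.map Prod.fst = P) {F : Ω × X → ℝ} (hF : Integrable F (P.prod lam)) (A : Set X) :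
    ∫ g in A, ∫ p, F (p.1, p.2 + g) ∂μ ∂lam = lam.real A * ∫ p, F p ∂(P.prod lam) := by
  have hsmear := hErg.map_prod_restrict_add_snd_eq_smul hμ hfst A
  calc ∫ g in A, ∫ p, F (p.1, p.2 + g) ∂μ ∂lam
      = ∫ q, F (q.1.1, q.1.2 + q.2) ∂(μ.prod (lam.restrict A)) :=
        (integral_prod_symm _ (hErg.integrable_comp_add_snd hμ hfst hF A)).symm
    _ = ∫ p, F p ∂((μ.prod (lam.restrict A)).map fun q => (q.1.1, q.1.2 + q.2)) := by
        rw [integral_map (by fun_prop)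
          (hsmear ▸ hF.smul_measure (measure_ne_top lam A)).aestronglyMeasurable]
    _ = lam.real A * ∫ p, F p ∂(P.prod lam) := by
        rw [hsmear, integral_smul_measure, smul_eq_mul, measureReal_def]

theorem _root_.MeasureTheory.Ergodic.integral_eq_integral_prod_of_continuous [TopologicalSpace X]
    [lam.IsOpenPosMeasure]
    (hErg : Ergodic (fun p : Ω × X => (θ p.1, p.2 + r p.1)) (P.prod lam))
    (hμ : MeasurePreserving (fun p : Ω × X => (θ p.1, p.2 + r p.1)) μ μ)
    (hfst : μ.map Prod.fst = P) {F : Ω × X → ℝ} (hF : Integrable F (P.prod lam))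
    (hcont : Continuous fun g => ∫ p, F (p.1, p.2 + g) ∂μ) :
    ∫ p, F p ∂μ = ∫ p, F p ∂(P.prod lam) := by
  have hae : (fun g => ∫ p, F (p.1, p.2 + g) ∂μ) =ᵐ[lam] fun _ => ∫ p, F p ∂(P.prod lam) :=
    ae_eq_of_forall_setIntegral_eq_of_sigmaFinite
      (fun A _ _ => (hErg.integrable_comp_add_snd hμ hfst hF A).integral_prod_right)
      (fun _ _ _ => integrableOn_const)
      (fun A _ _ => by
        rw [hErg.setIntegral_integral_add_snd hμ hfst hF, setIntegral_const, smul_eq_mul])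
  simpa using congrFun ((hcont.ae_eq_iff_eq lam continuous_const).mp hae) 0

end SkewRotation

theorem unique_invariant_measure_skew_rotation_general
    {Ω : Type*} [MeasurableSpace Ω] (P : Measure Ω) [IsProbabilityMeasure P]
    (θ : Ω → Ω)
    {X : Type*} [TopologicalSpace X] [CompactSpace X] [TopologicalSpace.MetrizableSpace X]
    [AddCommGroup X] [IsTopologicalAddGroup X] [MeasurableSpace X] [BorelSpace X]
    (lam : Measure X) [IsProbabilityMeasure lam] [lam.IsAddHaarMeasure]
    (r : Ω → X)
    (hErg : Ergodic (fun p : Ω × X => (θ p.1, p.2 + r p.1)) (P.prod lam)) :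
    ∀ μ : Measure (Ω × X), IsProbabilityMeasure μ → μ.map Prod.fst = P →
      μ.map (fun p : Ω × X => (θ p.1, p.2 + r p.1)) = μ → μ = P.prod lam := by
  intro μ _ hfst hinv
  have hμ : MeasurePreserving (fun p : Ω × X => (θ p.1, p.2 + r p.1)) μ μ :=
    ⟨hErg.measurable, hinv⟩
  refine Measure.eq_of_integral_indicator_mul_eq fun E hE f => ?_
  have hF : Integrable (fun p : Ω × X => E.indicator 1 p.1 * f p.2) (P.prod lam) :=
    .of_bound (measurable_indicator_one_mul hE f.continuous.measurable).aestronglyMeasurable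
      ‖f‖ (.of_forall fun p => norm_indicator_one_mul_le E f p.1 p.2)
  exact hErg.integral_eq_integral_prod_of_continuous hμ hfst hF
    (continuous_integral_indicator_mul_add μ hE f)

/-- Proposition 3.12, Quas: for an ergodic skew-product rotation over
an ergodic base, the product of the base measure with Haar measure is the unique
invariant measure with the given marginal. -/
theorem unique_invariant_measure_skew_rotation
    {Ω : Type*} [MeasurableSpace Ω] (P : Measure Ω) [IsProbabilityMeasure P]
    (θ : Ω → Ω) (hθ : Ergodic θ P)
    {X : Type*} [TopologicalSpace X] [CompactSpace X] [TopologicalSpace.MetrizableSpace X]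
    [AddCommGroup X] [IsTopologicalAddGroup X] [MeasurableSpace X] [BorelSpace X]
    (lam : Measure X) [IsProbabilityMeasure lam] [lam.IsAddHaarMeasure]
    (r : Ω → X) (hr : Measurable r)
    (hErg : Ergodic (fun p : Ω × X => (θ p.1, p.2 + r p.1)) (P.prod lam)) :
    ∀ μ : Measure (Ω × X), IsProbabilityMeasure μ → μ.map Prod.fst = P →
      μ.map (fun p : Ω × X => (θ p.1, p.2 + r p.1)) = μ → μ = P.prod lam :=
  unique_invariant_measure_skew_rotation_general P θ lam r hErg

end RandomCircle
end
end
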